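/- On ℝ⁶ with coordinates (x₁,…,x₆) = (γ₁,γ₂,γ₃,M₁,M₂,M₃), define the constant trivectors T₂^{abc} = (∂₁∧∂₂∧∂₃)^{abc} − a(∂₄∧∂₅∧∂₆)^{abc} and T₃^{abc} = ∑_{i,j,k=1}^{3} ε_{ijk} (∂_i ∧ ∂_{j+3} ∧ ∂_{k+3})^{abc}, where (u∧v∧w)^{abc} = u_a(v_bw_c − v_cw_b) − u_b(v_aw_c − v_cw_a) + u_c(v_aw_b − v_bw_a). Let X = (2(γ₃M₂−γ₂M₃), 2(γ₁M₃−γ₃M₁), 2(γ₂M₁−γ₁M₂), −aγ₂, aγ₁, 0) be the Lagrange vector field, f₁ = γ₁²+γ₂²+γ₃², f₂ = γ₁M₁+γ₂M₂+γ₃M₃, f₃ = M₁²+M₂²+M₃²+aγ₃, f₄ = M₃, let P₂ be the antisymmetric matrix field with upper entries (1,2) ↦ 2γ₃, (1,3) ↦ −2γ₂, (2,3) ↦ 2γ₁, (4,5) ↦ −a (others 0), and let P₃ have entries (i,j) ↦ 0 for i,j ≤ 3, (i,j+3) ↦ ∑_k ε_{ijk}γ_k, (i+3,j+3) ↦ ∑_k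 ε_{ijk}M_k. Then at every point: (a) ∑_c T₂^{abc} ∂(f₁+f₄)/∂x_c = (P₂)_{ab} and ∑_{b,c} T₂^{abc} (∂(f₁+f₄)/∂x_b)(∂f₂/∂x_c) = −X_a; (b) ∑_c T₃^{abc} ∂f₂/∂x_c = 2(P₃)_{ab} and ∑_{b,c} T₃^{abc} (∂f₂/∂x_b)(∂f₃/∂x_c) = −2X_a. -/

import Mathlib

noncomputable section

open scoped BigOperators

/-- Partial derivative of `f` in the `i`-th coordinate direction at `x`. -/
def pd {n : ℕ} (i : Fin n) (f : (Fin n → ℝ) → ℝ) (x : Fin n → ℝ) : ℝ :=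
  fderiv ℝ f x (Pi.single i 1)

/-- The Lagrange vector field on `ℝ⁶` with coordinates
`(x₁,…,x₆) = (γ₁,γ₂,γ₃,M₁,M₂,M₃)`. -/
def lagX (a : ℝ) (x : Fin 6 → ℝ) : Fin 6 → ℝ :=
  ![2 * (x 2 * x 4 - x 1 * x 5), 2 * (x 0 * x 5 - x 2 * x 3),
    2 * (x 1 * x 3 - x 0 * x 4), -(a * x 1), a * x 0, 0]

/-- `f₁ = γ₁² + γ₂² + γ₃²`. -/
def lagF₁ (x : Fin 6 → ℝ) : ℝ := x 0 ^ 2 + x 1 ^ 2 + x 2 ^ 2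

/-- `f₂ = γ₁M₁ + γ₂M₂ + γ₃M₃`. -/
def lagF₂ (x : Fin 6 → ℝ) : ℝ := x 0 * x 3 + x 1 * x 4 + x 2 * x 5

/-- `f₃ = M₁² + M₂² + M₃² + aγ₃`. -/
def lagF₃ (a : ℝ) (x : Fin 6 → ℝ) : ℝ := x 3 ^ 2 + x 4 ^ 2 + x 5 ^ 2 + a * x 2

/-- `f₄ = M₃`. -/
def lagF₄ (x : Fin 6 → ℝ) : ℝ := x 5

/-- Contraction of a matrix field with the gradient of a function:
`(P∇f)_i = ∑_j P_{ij} ∂f/∂x_j`. -/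
def Pgrad {n : ℕ} (P : (Fin n → ℝ) → Matrix (Fin n) (Fin n) ℝ)
    (f : (Fin n → ℝ) → ℝ) (x : Fin n → ℝ) (i : Fin n) : ℝ :=
  ∑ j, P x i j * pd j f x

/-- Lie derivative of a (2,0) tensor (matrix field) `P` along the vector field `X`:
`(L_X P)_{ij} = ∑_k (X_k ∂P_{ij}/∂x_k − P_{kj} ∂X_i/∂x_k − P_{ik} ∂X_j/∂x_k)`. -/
def matLie {n : ℕ} (X : (Fin n → ℝ) → Fin n → ℝ)
    (P : (Fin n → ℝ) → Matrix (Fin n) (Fin n) ℝ) (x : Fin n → ℝ) (i j : Fin n) : ℝ :=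
  ∑ k, (X x k * pd k (fun y => P y i j) x - P x k j * pd k (fun y => X y i) x
        - P x i k * pd k (fun y => X y j) x)

/-- The Jacobiator of an antisymmetric matrix field; it vanishes identically iff `P`
satisfies the Jacobi identity (i.e. is a Poisson bivector). -/
def jacobiator {n : ℕ} (P : (Fin n → ℝ) → Matrix (Fin n) (Fin n) ℝ)
    (x : Fin n → ℝ) (i j k : Fin n) : ℝ :=
  ∑ l, (P x l i * pd l (fun y => P y j k) x + P x l j * pd l (fun y => P y k i) x
        + P x l k * pd l (fun y => P y i j) x)

/-- The Levi-Civita symbol on three indices, `ε₀₁₂ = 1` (0-based). -/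
def eps (i j k : Fin 3) : ℝ :=
  (((j : ℕ) : ℝ) - ((i : ℕ) : ℝ)) * (((k : ℕ) : ℝ) - ((j : ℕ) : ℝ)) *
    (((k : ℕ) : ℝ) - ((i : ℕ) : ℝ)) / 2

/-- Components of the wedge product of three vectors:
`(u∧v∧w)^{abc} = u_a(v_bw_c − v_cw_b) − u_b(v_aw_c − v_cw_a) + u_c(v_aw_b − v_bw_a)`. -/
def wedge3 (u v w : Fin 6 → ℝ) (a b c : Fin 6) : ℝ :=
  u a * (v b * w c - v c * w b) - u b * (v a * w c - v c * w a)
    + u c * (v a * w b - v b * w a)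

/-- The `i`-th standard basis vector `∂_i` of `ℝ⁶`. -/
def e6 (i : Fin 6) : Fin 6 → ℝ := fun j => if j = i then 1 else 0

/-- Embedding of an index `i ∈ {1,2,3}` as the index of `∂_i` in `ℝ⁶`. -/
def lo (i : Fin 3) : Fin 6 := ⟨(i : ℕ), by have := i.isLt; omega⟩

/-- Embedding of an index `i ∈ {1,2,3}` as the index of `∂_{i+3}` in `ℝ⁶`. -/
def hi (i : Fin 3) : Fin 6 := ⟨(i : ℕ) + 3, by have := i.isLt; omega⟩

/-- Lie derivative along `X` of a trivector `T` with constant components: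
`(L_X T)^{abc} = −∑_ℓ ((∂X_a/∂x_ℓ)T^{ℓbc} + (∂X_b/∂x_ℓ)T^{aℓc} + (∂X_c/∂x_ℓ)T^{abℓ})`. -/
def triLie (X : (Fin 6 → ℝ) → Fin 6 → ℝ) (T : Fin 6 → Fin 6 → Fin 6 → ℝ)
    (x : Fin 6 → ℝ) (a b c : Fin 6) : ℝ :=
  -∑ l, (pd l (fun y => X y a) x * T l b c + pd l (fun y => X y b) x * T a l c
        + pd l (fun y => X y c) x * T a b l)

/-- The constant trivector `T₂ = ∂₁∧∂₂∧∂₃ − a ∂₄∧∂₅∧∂₆`. -/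
def lagT₂ (a : ℝ) (i j k : Fin 6) : ℝ :=
  wedge3 (e6 0) (e6 1) (e6 2) i j k - a * wedge3 (e6 3) (e6 4) (e6 5) i j k

/-- The constant trivector `T₃ = ∑_{i,j,k} ε_{ijk} ∂_i ∧ ∂_{j+3} ∧ ∂_{k+3}`. -/
def lagT₃ (a b c : Fin 6) : ℝ :=
  ∑ i : Fin 3, ∑ j : Fin 3, ∑ k : Fin 3,
    eps i j k * wedge3 (e6 (lo i)) (e6 (hi j)) (e6 (hi k)) a b c

/-- The invariant Poisson bivector `P₂` of the Lagrange case. -/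
def lagP₂ (a : ℝ) (x : Fin 6 → ℝ) : Matrix (Fin 6) (Fin 6) ℝ :=
  !![0, 2 * x 2, -(2 * x 1), 0, 0, 0;
     -(2 * x 2), 0, 2 * x 0, 0, 0, 0;
     2 * x 1, -(2 * x 0), 0, 0, 0, 0;
     0, 0, 0, 0, -a, 0;
     0, 0, 0, a, 0, 0;
     0, 0, 0, 0, 0, 0]

/-- The canonical Lie–Poisson bivector `P₃ = P_c` on `e*(3)`. -/
def lagP₃ (x : Fin 6 → ℝ) : Matrix (Fin 6) (Fin 6) ℝ :=
  !![0, 0, 0, 0, x 2, -(x 1);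
     0, 0, 0, -(x 2), 0, x 0;
     0, 0, 0, x 1, -(x 0), 0;
     0, x 2, -(x 1), 0, x 5, -(x 4);
     -(x 2), 0, x 0, -(x 5), 0, x 3;
     x 1, -(x 0), 0, x 4, -(x 3), 0]

/-! The gradients of `f₁ + f₄`, `f₂`, `f₃` are affine in `x`, and contracting the constant
trivectors with one of them gives a bivector: `T₂ ⌟ d(f₁+f₄) = P₂` and `T₃ ⌟ df₂ = 2P₃`.
Because `T₂`, `T₃` are antisymmetric in their last two slots, contracting once more gives
`T ⌟ dg ⌟ dh = −P dh`, and the Lagrange field is Hamiltonian for both structures: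
`X = P₂ df₂ = P₃ df₃`. -/

section PartialDerivative

variable {n : ℕ} {f g : (Fin n → ℝ) → ℝ} {x : Fin n → ℝ}

theorem pd_apply (i j : Fin n) :
    pd i (fun y => y j) x = if j = i then 1 else 0 := by
  simp [pd, (hasFDerivAt_apply j x).fderiv, Pi.single_apply]

theorem pd_const (i : Fin n) (c : ℝ) : pd i (fun _ => c) x = 0 := by
  simp [pd]

theorem pd_add (i : Fin n) (hf : DifferentiableAt ℝ f x) (hg : DifferentiableAt ℝ g x) :
    pd i (fun y => f y + g y) x = pd i f x + pd i g x := by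
  simp [pd, fderiv_fun_add hf hg]

theorem pd_mul (i : Fin n) (hf : DifferentiableAt ℝ f x) (hg : DifferentiableAt ℝ g x) :
    pd i (fun y => f y * g y) x = f x * pd i g x + g x * pd i f x := by
  simp [pd, fderiv_fun_mul hf hg]

theorem pd_pow_two (i : Fin n) (hf : DifferentiableAt ℝ f x) :
    pd i (fun y => f y ^ 2) x = 2 * f x * pd i f x := by
  simp only [pow_two]; rw [pd_mul i hf hf]; ring

end PartialDerivative

theorem pd_lagF₁_add_lagF₄ (k : Fin 6) (x : Fin 6 → ℝ) :
    pd k (fun y => lagF₁ y + lagF₄ y) x = ![2 * x 0, 2 * x 1, 2 * x 2, 0, 0, 1] k := by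
  simp (disch := fun_prop) only [lagF₁, lagF₄, pd_add, pd_pow_two, pd_apply]
  fin_cases k <;> simp

theorem pd_lagF₂ (k : Fin 6) (x : Fin 6 → ℝ) :
    pd k lagF₂ x = ![x 3, x 4, x 5, x 0, x 1, x 2] k := by
  unfold lagF₂
  simp (disch := fun_prop) only [pd_add, pd_mul, pd_apply]
  fin_cases k <;> simp

theorem pd_lagF₃ (a : ℝ) (k : Fin 6) (x : Fin 6 → ℝ) :
    pd k (lagF₃ a) x = ![0, 0, a, 2 * x 3, 2 * x 4, 2 * x 5] k := by
  unfold lagF₃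
  simp (disch := fun_prop) only [pd_add, pd_pow_two, pd_mul, pd_apply, pd_const]
  fin_cases k <;> simp

theorem lagT₂_swap (a : ℝ) (i j k : Fin 6) : lagT₂ a i k j = -lagT₂ a i j k := by
  unfold lagT₂ wedge3; ring

-- `ε` and the wedge are both alternating, so each cyclic term occurs twice.
theorem lagT₃_eq (a b c : Fin 6) :
    lagT₃ a b c = 2 * (wedge3 (e6 0) (e6 4) (e6 5) a b c + wedge3 (e6 1) (e6 5) (e6 3) a b c
      + wedge3 (e6 2) (e6 3) (e6 4) a b c) := by
  simp only [lagT₃, Fin.sum_univ_three, eps, lo, hi, wedge3, Fin.val_zero, Fin.val_one,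
    Fin.val_two]
  push_cast
  ring

theorem lagT₃_swap (i j k : Fin 6) : lagT₃ i k j = -lagT₃ i j k := by
  simp only [lagT₃_eq, wedge3]; ring

theorem sum_sum_mul_mul_of_swap {ι R : Type*} [Fintype ι] [CommRing R] {T : ι → ι → ι → R}
    (hT : ∀ a b c, T a c b = -T a b c) (θ η : ι → R) (a : ι) :
    ∑ b, ∑ c, T a b c * θ b * η c = -∑ c, (∑ b, T a c b * θ b) * η c := by
  rw [Finset.sum_comm]
  simp only [Finset.sum_mul, ← Finset.sum_neg_distrib]
  refine Finset.sum_congr rfl fun c _ => Finset.sum_congr rfl fun b _ => ?_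
  rw [hT a c b]; ring

theorem sum_lagT₂_mul_pd_lagF₁_add_lagF₄ (a : ℝ) (x : Fin 6 → ℝ) (i j : Fin 6) :
    ∑ k, lagT₂ a i j k * pd k (fun y => lagF₁ y + lagF₄ y) x = lagP₂ a x i j := by
  simp only [lagT₂, pd_lagF₁_add_lagF₄, Fin.sum_univ_six]
  fin_cases i <;> fin_cases j <;> simp [wedge3, e6, lagP₂]

theorem sum_lagT₃_mul_pd_lagF₂ (x : Fin 6 → ℝ) (i j : Fin 6) :
    ∑ k, lagT₃ i j k * pd k lagF₂ x = 2 * lagP₃ x i j := by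
  simp only [lagT₃_eq, pd_lagF₂, Fin.sum_univ_six]
  fin_cases i <;> fin_cases j <;> simp [wedge3, e6, lagP₃]

theorem Pgrad_lagP₂_lagF₂ (a : ℝ) (x : Fin 6 → ℝ) : Pgrad (lagP₂ a) lagF₂ x = lagX a x := by
  ext i
  fin_cases i <;> simp [Pgrad, Fin.sum_univ_six, pd_lagF₂, lagP₂, lagX] <;> ring

theorem Pgrad_lagP₃_lagF₃ (a : ℝ) (x : Fin 6 → ℝ) : Pgrad lagP₃ (lagF₃ a) x = lagX a x := by
  ext i
  fin_cases i <;> simp [Pgrad, Fin.sum_univ_six, pd_lagF₃, lagP₃, lagX] <;> ring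

/-- The conditional numerical invariants `T₂` and `T₃` of the Lagrange case:
(a) `T₂ d(f₁+f₄) = P₂` and `T₂ d(f₁+f₄) df₂ = −X`;
(b) `T₃ df₂ = 2P₃` and `T₃ df₂ df₃ = −2X`. -/
theorem lagrange_T2_T3 (a : ℝ) (x : Fin 6 → ℝ) :
    (∀ i j : Fin 6, ∑ k, lagT₂ a i j k * pd k (fun y => lagF₁ y + lagF₄ y) x
      = lagP₂ a x i j) ∧
    (∀ i : Fin 6, ∑ j, ∑ k, lagT₂ a i j k * pd j (fun y => lagF₁ y + lagF₄ y) x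
        * pd k lagF₂ x = -(lagX a x i)) ∧
    (∀ i j : Fin 6, ∑ k, lagT₃ i j k * pd k lagF₂ x = 2 * lagP₃ x i j) ∧
    (∀ i : Fin 6, ∑ j, ∑ k, lagT₃ i j k * pd j lagF₂ x * pd k (lagF₃ a) x
      = -2 * lagX a x i) := by
  refine ⟨sum_lagT₂_mul_pd_lagF₁_add_lagF₄ a x, fun i => ?_,
    sum_lagT₃_mul_pd_lagF₂ x, fun i => ?_⟩
  · rw [sum_sum_mul_mul_of_swap (lagT₂_swap a), ← Pgrad_lagP₂_lagF₂ a x]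
    simp only [sum_lagT₂_mul_pd_lagF₁_add_lagF₄, Pgrad]
  · rw [sum_sum_mul_mul_of_swap lagT₃_swap, ← Pgrad_lagP₃_lagF₃ a x]
    simp only [sum_lagT₃_mul_pd_lagF₂, Pgrad, mul_assoc, ← Finset.mul_sum]
    ring
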